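/- The regular language L = b*ab* + b* = { bⁱabʲ : i,j ≥ 0 } ∪ { bⁱ : i ≥ 0 } over the alphabet {a,b} is not accepted by any state-deterministic sensing 5'→3' WK automaton, but L is accepted by a quasi-deterministic sensing 5'→3' WK automaton (e.g., a DFA regarded as a sensing 5'→3' WK automaton whose second head never reads). -/

import Mathlib

open Computability

/-- The two-letter alphabet `{a, b}`. -/
inductive Letter : Type
  | a : Letter
  | b : Letter
deriving DecidableEq

instance : Fintype Letter :=
  ⟨{Letter.a, Letter.b}, fun x => by cases x <;> simp⟩

open Letter

/-- A sensing 5'→3' Watson-Crick automaton over the alphabet `T` with state set `Q`: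
an initial state `q0`, a set `F` of final states, and a transition mapping
`δ : Q × T* × T* → 2^Q` that is nonempty for only finitely many triples. -/
structure WKAutomaton (T : Type) (Q : Type) where
  q0 : Q
  F : Set Q
  δ : Q → List T → List T → Set Q
  finite_delta : {t : Q × List T × List T | (δ t.1 t.2.1 t.2.2).Nonempty}.Finite

namespace WKAutomaton

variable {T Q : Type}

/-- One computation step on configurations:
`(q, x ++ w' ++ y) ⇒ (q', w')` iff `q' ∈ δ q x y`. -/
def Step (A : WKAutomaton T Q) (c c' : Q × List T) : Prop :=
  ∃ x y : List T, c.2 = x ++ c'.2 ++ y ∧ c'.1 ∈ A.δ c.1 x y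

/-- The accepted language: words `w` with `(q₀, w) ⇒* (q_F, λ)` for some final `q_F`. -/
def Lang (A : WKAutomaton T Q) : Set (List T) :=
  {w | ∃ qf ∈ A.F, Relation.ReflTransGen A.Step (A.q0, w) (qf, [])}

/-- `A` is deterministic: in every configuration at most one computation step
(choice of `x`, `y`, `w'`, `q'`) is applicable. -/
def Deterministic (A : WKAutomaton T Q) : Prop :=
  ∀ (q : Q) (w x₁ y₁ w₁ x₂ y₂ w₂ : List T) (q₁ q₂ : Q),
    w = x₁ ++ w₁ ++ y₁ → q₁ ∈ A.δ q x₁ y₁ →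
    w = x₂ ++ w₂ ++ y₂ → q₂ ∈ A.δ q x₂ y₂ →
    x₁ = x₂ ∧ y₁ = y₂ ∧ w₁ = w₂ ∧ q₁ = q₂

/-- `A` is quasi-deterministic: for every configuration `(q,w)`, whenever
`(q,w) ⇒ (p,u)` and `(q,w) ⇒ (r,v)`, it holds that `p = r`. -/
def QuasiDet (A : WKAutomaton T Q) : Prop :=
  ∀ (q : Q) (w : List T) (p r : Q) (u v : List T),
    A.Step (q, w) (p, u) → A.Step (q, w) (r, v) → p = r

/-- `A` is state-deterministic: for every state `q` there is at most one state `p`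
with `p ∈ δ(q,u,v)` for some words `u`, `v`. -/
def StateDet (A : WKAutomaton T Q) : Prop :=
  ∀ (q p₁ p₂ : Q) (u₁ v₁ u₂ v₂ : List T),
    p₁ ∈ A.δ q u₁ v₁ → p₂ ∈ A.δ q u₂ v₂ → p₁ = p₂

/-- `A` is stateless: `Q = F = {q₀}`. -/
def Stateless (A : WKAutomaton T Q) : Prop :=
  (∀ q : Q, q = A.q0) ∧ A.F = {A.q0}

/-- `A` is all-final: `Q = F`. -/
def AllFinal (A : WKAutomaton T Q) : Prop := A.F = Set.univ

/-- `A` is simple: at most one head reads in each step. -/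
def Simple (A : WKAutomaton T Q) : Prop :=
  ∀ (q : Q) (u v : List T), (A.δ q u v).Nonempty → u = [] ∨ v = []

/-- `A` is 1-limited: exactly one letter is read in each step. -/
def OneLimited (A : WKAutomaton T Q) : Prop :=
  ∀ (q : Q) (u v : List T), (A.δ q u v).Nonempty →
    (u = [] ∧ v.length = 1) ∨ (u.length = 1 ∧ v = [])

end WKAutomaton

/-- Equality of languages modulo the empty word. -/
def EqModLambda {T : Type} (L₁ L₂ : Set (List T)) : Prop :=
  ∀ w : List T, w ≠ [] → (w ∈ L₁ ↔ w ∈ L₂)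

/-- `L` is accepted (modulo the empty word) by some sensing 5'→3' WK automaton
with a finite state set satisfying the property `P`. -/
def AcceptsWith (T : Type) (P : ∀ Q : Type, WKAutomaton T Q → Prop)
    (L : Set (List T)) : Prop :=
  ∃ (Q : Type) (_ : Finite Q) (A : WKAutomaton T Q), P Q A ∧ EqModLambda A.Lang L

/-- The language `b*ab* + b*`. -/
def Lbabb : Set (List Letter) :=
  {w | (∃ i j : ℕ, w = List.replicate i b ++ a :: List.replicate j b) ∨
       (∃ i : ℕ, w = List.replicate i b)}

/-!
In a state-deterministic WK automaton the state reached after `n` steps depends only on `n`,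
so the first `n` steps of an accepting run can be replaced by any other `n`-step run. Let `M`
bound the length of a single read, take an accepting run of `a` with `N` steps and one of
`bᶜabᶜ` with `C = N * M`. In `N` steps neither head of the second run reaches the `a`, so
grafting the run of `a` onto its remaining steps yields an accepted word with two `a`s.

Conversely, `b*ab* + b*` is the set of words with at most one `a`; a DFA recognizes it, and a
DFA whose letters are read by the 5' head alone is quasi-deterministic.
-/

namespace WKAutomaton

variable {T Q : Type}

/-- A run is recorded as the list of pairs `(x, y)` read by the two heads in each step;
this is the word read by the 5' head. -/
def readLeft (l : List (List T × List T)) : List T := (l.map Prod.fst).flatten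

/-- The word read by the 3' head, which moves from right to left. -/
def readRight (l : List (List T × List T)) : List T := (l.map Prod.snd).reverse.flatten

@[simp] lemma readLeft_nil : readLeft ([] : List (List T × List T)) = [] := rfl

@[simp] lemma readRight_nil : readRight ([] : List (List T × List T)) = [] := rfl

@[simp] lemma readLeft_cons (x y : List T) (l : List (List T × List T)) :
    readLeft ((x, y) :: l) = x ++ readLeft l := rfl

@[simp] lemma readRight_cons (x y : List T) (l : List (List T × List T)) :
    readRight ((x, y) :: l) = readRight l ++ y := by
  simp [readRight]

@[simp] lemma readLeft_append (u v : List (List T × List T)) :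
    readLeft (u ++ v) = readLeft u ++ readLeft v := by
  simp [readLeft]

@[simp] lemma readRight_append (u v : List (List T × List T)) :
    readRight (u ++ v) = readRight v ++ readRight u := by
  simp [readRight]

inductive IsRun (A : WKAutomaton T Q) : Q → List (List T × List T) → Q → Prop
  | nil (q : Q) : IsRun A q [] q
  | cons {q r p : Q} {x y : List T} {l : List (List T × List T)} :
      r ∈ A.δ q x y → IsRun A r l p → IsRun A q ((x, y) :: l) p

variable {A : WKAutomaton T Q}

lemma IsRun.reflTransGen {q p : Q} {l : List (List T × List T)} (h : A.IsRun q l p) :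
    Relation.ReflTransGen A.Step (q, readLeft l ++ readRight l) (p, []) := by
  induction h with
  | nil => exact .refl
  | @cons q r p x y l hr _ ih => exact .head ⟨x, y, by simp, hr⟩ ih

lemma reflTransGen_step_iff {c : Q × List T} {p : Q} :
    Relation.ReflTransGen A.Step c (p, []) ↔
      ∃ l, A.IsRun c.1 l p ∧ c.2 = readLeft l ++ readRight l := by
  constructor
  · intro h
    induction h using Relation.ReflTransGen.head_induction_on with
    | refl => exact ⟨[], .nil p, rfl⟩
    | head hstep _ ih =>
      obtain ⟨x, y, hw, hmem⟩ := hstep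
      obtain ⟨l, hl, hwl⟩ := ih
      exact ⟨(x, y) :: l, .cons hmem hl, by simp [hw, hwl]⟩
  · obtain ⟨q, w⟩ := c
    rintro ⟨l, hl, rfl⟩
    exact hl.reflTransGen

lemma mem_lang_iff {w : List T} :
    w ∈ A.Lang ↔ ∃ p ∈ A.F, ∃ l, A.IsRun A.q0 l p ∧ w = readLeft l ++ readRight l := by
  simp only [Lang, Set.mem_ofPred_eq, reflTransGen_step_iff]

lemma IsRun.append {q r p : Q} {u v : List (List T × List T)}
    (hu : A.IsRun q u r) (hv : A.IsRun r v p) : A.IsRun q (u ++ v) p := by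
  induction hu with
  | nil => exact hv
  | cons hr _ ih => exact .cons hr (ih hv)

lemma IsRun.of_append {q p : Q} {u v : List (List T × List T)} (h : A.IsRun q (u ++ v) p) :
    ∃ r, A.IsRun q u r ∧ A.IsRun r v p := by
  induction u generalizing q with
  | nil => exact ⟨q, .nil q, h⟩
  | cons e u ih =>
    obtain ⟨x, y⟩ := e
    obtain _ | ⟨hr, h⟩ := h
    obtain ⟨s, hu, hv⟩ := ih h
    exact ⟨s, .cons hr hu, hv⟩

lemma IsRun.length_read_le {M : ℕ}
    (hM : ∀ q x y, (A.δ q x y).Nonempty → x.length ≤ M ∧ y.length ≤ M)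
    {q p : Q} {l : List (List T × List T)} (h : A.IsRun q l p) :
    (readLeft l).length ≤ l.length * M ∧ (readRight l).length ≤ l.length * M := by
  induction h with
  | nil => simp
  | cons hr _ ih =>
    have := hM _ _ _ ⟨_, hr⟩
    simp only [readLeft_cons, readRight_cons, List.length_append, List.length_cons]
    constructor <;> linarith

lemma exists_read_bound (A : WKAutomaton T Q) :
    ∃ M, ∀ q x y, (A.δ q x y).Nonempty → x.length ≤ M ∧ y.length ≤ M := by
  obtain ⟨M, hM⟩ := (A.finite_delta.image fun t => max t.2.1.length t.2.2.length).bddAbove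
  exact ⟨M, fun q x y h => max_le_iff.1 (hM ⟨(q, x, y), h, rfl⟩)⟩

lemma StateDet.isRun_eq (hA : A.StateDet) {q p₁ p₂ : Q} {l₁ l₂ : List (List T × List T)}
    (h₁ : A.IsRun q l₁ p₁) (h₂ : A.IsRun q l₂ p₂) (hl : l₁.length = l₂.length) : p₁ = p₂ := by
  induction h₁ generalizing l₂ with
  | nil => cases l₂ with
    | nil => cases h₂; rfl
    | cons => simp at hl
  | cons hr _ ih =>
    obtain _ | ⟨hr', h₂⟩ := h₂
    · simp at hl
    · exact ih (hA _ _ _ _ _ _ _ hr hr' ▸ h₂) (by simpa using hl)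

lemma StateDet.isRun_splice (hA : A.StateDet) {q p₁ p₂ : Q} {l u v : List (List T × List T)}
    (hl : A.IsRun q l p₁) (huv : A.IsRun q (u ++ v) p₂) (hlen : l.length = u.length) :
    A.IsRun q (l ++ v) p₂ := by
  obtain ⟨r, hu, hv⟩ := huv.of_append
  exact hl.append (hA.isRun_eq hl hu hlen ▸ hv)

end WKAutomaton

namespace DFA

variable {α σ : Type}

def toWKAutomaton [Finite α] [Finite σ] (M : DFA α σ) : WKAutomaton α σ where
  q0 := M.start
  F := M.accept
  δ q x y := {p | ∃ c, x = [c] ∧ y = [] ∧ p = M.step q c}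
  finite_delta := (Set.finite_range fun t : σ × α => (t.1, [t.2], ([] : List α))).subset <| by
    rintro ⟨q, x, y⟩ ⟨p, c, rfl, rfl, -⟩
    exact ⟨(q, c), rfl⟩

variable [Finite α] [Finite σ] (M : DFA α σ)

lemma toWKAutomaton_step_iff {c c' : σ × List α} :
    M.toWKAutomaton.Step c c' ↔ ∃ x, c.2 = x :: c'.2 ∧ c'.1 = M.step c.1 x := by
  constructor
  · rintro ⟨_, _, hw, c, rfl, rfl, hp⟩
    exact ⟨c, by simpa using hw, hp⟩
  · rintro ⟨x, hw, hp⟩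
    exact ⟨[x], [], by simpa using hw, x, rfl, rfl, hp⟩

lemma toWKAutomaton_quasiDet : M.toWKAutomaton.QuasiDet := by
  intro q w p r u v hu hv
  obtain ⟨x, hw, rfl⟩ := (M.toWKAutomaton_step_iff).1 hu
  obtain ⟨x', hw', rfl⟩ := (M.toWKAutomaton_step_iff).1 hv
  rw [(List.cons_eq_cons.1 (hw.symm.trans hw')).1]

lemma reflTransGen_toWKAutomaton_step_iff {c : σ × List α} {p : σ} :
    Relation.ReflTransGen M.toWKAutomaton.Step c (p, []) ↔ M.evalFrom c.1 c.2 = p := by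
  constructor
  · intro h
    -- `M.evalFrom c.1 c.2` is invariant along computation steps.
    induction h using Relation.ReflTransGen.head_induction_on with
    | refl => rfl
    | head hstep _ ih =>
      obtain ⟨x, hw, hp⟩ := (M.toWKAutomaton_step_iff).1 hstep
      rw [hw, evalFrom_cons, ← hp, ih]
  · obtain ⟨q, w⟩ := c
    rintro rfl
    induction w generalizing q with
    | nil => exact .refl
    | cons x w ih => exact .head ((M.toWKAutomaton_step_iff).2 ⟨x, rfl, rfl⟩) (ih (M.step q x))

lemma mem_toWKAutomaton_lang_iff {w : List α} : w ∈ M.toWKAutomaton.Lang ↔ w ∈ M.accepts := by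
  simp only [WKAutomaton.Lang, Set.mem_ofPred_eq, reflTransGen_toWKAutomaton_step_iff,
    mem_accepts, eval]
  exact ⟨fun ⟨_, hp, he⟩ => he ▸ hp, fun h => ⟨_, h, rfl⟩⟩

end DFA

open WKAutomaton

lemma mem_Lbabb_iff {w : List Letter} : w ∈ Lbabb ↔ w.count a ≤ 1 := by
  have eq_replicate_b : ∀ {v : List Letter}, v.count a = 0 → v = List.replicate v.length b := by
    intro v hv
    refine List.eq_replicate_iff.2 ⟨rfl, fun c hc => ?_⟩
    cases c
    · exact absurd hc (List.count_eq_zero.1 hv)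
    · rfl
  constructor
  · rintro (⟨i, j, rfl⟩ | ⟨i, rfl⟩) <;> simp [List.count_replicate]
  · intro hw
    rcases Nat.le_one_iff_eq_zero_or_eq_one.1 hw with h | h
    · exact Or.inr ⟨_, eq_replicate_b h⟩
    · obtain ⟨s, t, rfl⟩ := List.append_of_mem (List.count_pos_iff.1 (by omega : 0 < w.count a))
      simp only [List.count_append, List.count_cons_self] at h
      exact Or.inl ⟨s.length, t.length, by rw [← eq_replicate_b (by omega : s.count a = 0),
        ← eq_replicate_b (by omega : t.count a = 0)]⟩

lemma count_a_eq_one_of_replicate_eq_append {C : ℕ} {P X S : List Letter}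
    (h : List.replicate C b ++ a :: List.replicate C b = P ++ X ++ S)
    (hP : P.length ≤ C) (hS : S.length ≤ C) : X.count a = 1 := by
  have prefix_count : ∀ {P : List Letter}, P <+: List.replicate C b ++ a :: List.replicate C b →
      P.length ≤ C → P.count a = 0 := by
    intro P hpre hlen
    rw [List.prefix_iff_eq_take.1 hpre, List.take_append_of_le_length (by simpa using hlen),
      List.take_replicate, List.count_replicate]
    simp
  have hsym : (List.replicate C b ++ a :: List.replicate C b).reverse
      = List.replicate C b ++ a :: List.replicate C b := by simp
  have hPc := prefix_count (h ▸ List.prefix_append_of_prefix (List.prefix_append P X)) hP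
  have hSc : S.count a = 0 := by
    rw [← List.count_reverse]
    refine prefix_count (by rw [← hsym, h, List.reverse_append]; exact List.prefix_append _ _)
      (by simpa using hS)
  have htot := congrArg (List.count a) h
  simp only [List.count_append, List.count_replicate, List.count_cons_self, reduceCtorEq,
    beq_iff_eq, ↓reduceIte, zero_add] at htot
  omega

lemma not_acceptsWith_stateDet_Lbabb : ¬ AcceptsWith Letter (fun _ A => A.StateDet) Lbabb := by
  rintro ⟨Q, -, A, hA, hL⟩
  obtain ⟨M, hM⟩ := A.exists_read_bound
  obtain ⟨p₁, hp₁, l₁, hl₁, hw₁⟩ := mem_lang_iff.1 ((hL [a] (by simp)).2 (Or.inl ⟨0, 0, rfl⟩))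
  -- A word whose `a` lies beyond what `l₁.length` steps can read from either end.
  set C := l₁.length * M
  obtain ⟨p₂, hp₂, l₂, hl₂, hw₂⟩ := mem_lang_iff.1
    ((hL (List.replicate C b ++ a :: List.replicate C b) (by simp)).2 (Or.inl ⟨C, C, rfl⟩))
  rw [← List.take_append_drop l₁.length l₂] at hl₂ hw₂
  set u := l₂.take l₁.length
  set v := l₂.drop l₁.length
  obtain ⟨r, hu, -⟩ := hl₂.of_append
  have hv : (readLeft v ++ readRight v).count a = 1 := by
    have hlen : u.length ≤ l₁.length := List.length_take_le _ _
    obtain ⟨hleft, hright⟩ := hu.length_read_le hM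
    refine count_a_eq_one_of_replicate_eq_append (P := readLeft u) (S := readRight u) ?_
      (hleft.trans (Nat.mul_le_mul_right M hlen)) (hright.trans (Nat.mul_le_mul_right M hlen))
    simpa using hw₂
  have hu_len : l₁.length = u.length := by
    refine (List.length_take_of_le ?_).symm
    by_contra! hshort
    simp [v, List.drop_eq_nil_of_le hshort.le] at hv
  have hrun := hA.isRun_splice hl₁ hl₂ hu_len
  have hcount : (readLeft (l₁ ++ v) ++ readRight (l₁ ++ v)).count a = 2 := by
    have h₁ := congrArg (List.count a) hw₁
    simp only [List.count_append, readLeft_append, readRight_append] at h₁ hv ⊢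
    rw [List.count_singleton_self] at h₁
    omega
  have hmem : readLeft (l₁ ++ v) ++ readRight (l₁ ++ v) ∈ Lbabb :=
    (hL _ fun h => by rw [h] at hcount; simp at hcount).1 (mem_lang_iff.2 ⟨p₂, hp₂, _, hrun, rfl⟩)
  exact absurd (mem_Lbabb_iff.1 hmem) (by omega)

def atMostOneA : DFA Letter (Fin 3) where
  step q c := if c = a then ⟨min (q + 1) 2, by omega⟩ else q
  start := 0
  accept := {q | q ≤ 1}

lemma atMostOneA_evalFrom (q : Fin 3) (w : List Letter) :
    (atMostOneA.evalFrom q w : ℕ) = min (q + w.count a) 2 := by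
  induction w generalizing q with
  | nil => simp; omega
  | cons c w ih =>
    rw [DFA.evalFrom_cons, ih]
    cases c
    · simp [atMostOneA]
      omega
    · simp [atMostOneA]

lemma mem_atMostOneA_accepts {w : List Letter} : w ∈ atMostOneA.accepts ↔ w.count a ≤ 1 := by
  have h := atMostOneA_evalFrom 0 w
  change atMostOneA.evalFrom 0 w ≤ 1 ↔ _
  rw [Fin.le_iff_val_le_val, h]
  simp only [Fin.coe_ofNat_eq_mod, Nat.zero_mod, zero_add]
  omega

/-- The regular language `b*ab* + b*` is not accepted by any state-deterministic
sensing 5'→3' WK automaton, but it is accepted by a quasi-deterministic sensing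
5'→3' WK automaton (languages compared modulo the empty word). -/
theorem babb_not_stateDet_but_quasiDet :
    ¬ AcceptsWith Letter (fun _ A => A.StateDet) Lbabb ∧
    AcceptsWith Letter (fun _ A => A.QuasiDet) Lbabb :=
  ⟨not_acceptsWith_stateDet_Lbabb, Fin 3, inferInstance, atMostOneA.toWKAutomaton,
    atMostOneA.toWKAutomaton_quasiDet, fun _ _ => by
      rw [DFA.mem_toWKAutomaton_lang_iff, mem_atMostOneA_accepts, mem_Lbabb_iff]⟩
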